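/- In the group algebra ℂ[S_k], the symmetrizer e_k = (1/k!)∑_σ σ factorizes as e_k = (1/k!)(Ř_{k-1}(1)···Ř_1(k−1))···(Ř_{k-1}(1)Ř_{k-2}(2))(Ř_{k-1}(1)), where Ř_i(ξ) = s_i + 1/ξ and s_i is the simple transposition (i,i+1). -/

import Mathlib

/-!
Induction on `k`. Every bracket but the first involves only `s_1, …, s_{k-2}`
(0-indexed), so their product is the image of the product for `S_{k-1}` under the embedding
fixing `0`; by induction it is the sum `X` over the stabilizer of `0`. The full sum is
`∑_p (0 p) X` over the cosets, and `σ · (0 p) X = (0 σ(p)) X`. With `n = k - 1`, one shows by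
induction on `m` that
`Ř_{m-1}(n-m+1) ⋯ Ř_0(n) X = (0 m) X + (n-m+1)⁻¹ ∑_{p<m} (0 p) X`,
the step resting on `s_m` fixing every `p < m` and on `(n-m+1)⁻¹ (1 + (n-m)⁻¹) = (n-m)⁻¹`.
At `m = n` the right-hand side is the full sum.
-/

/-- The Baxterized element `Ř_i(ξ) = s_i + 1/ξ` of the group algebra `ℂ[S_k]`, where
`s_i` is the simple transposition exchanging the (0-indexed) positions `i` and `i+1`.
(Junk value `1` for out-of-range indices, which never occur below.) -/
noncomputable def Rh (k : ℕ) (i : ℕ) (ξ : ℂ) : MonoidAlgebra ℂ (Equiv.Perm (Fin k)) :=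
  if h : i + 1 < k then
    MonoidAlgebra.single (Equiv.swap ⟨i, by omega⟩ ⟨i + 1, h⟩) 1 + ξ⁻¹ • 1
  else 1

open Equiv Equiv.Perm MonoidAlgebra

theorem MonoidAlgebra.single_one_mul_sum_single {R G : Type*} [CommSemiring R] [Group G]
    [Fintype G] (g : G) :
    single g (1 : R) * ∑ h : G, single h 1 = ∑ h : G, single h 1 := by
  simp only [Finset.mul_sum, single_mul_single, mul_one]
  exact Fintype.sum_equiv (Equiv.mulLeft g) _ _ fun _ => rfl

namespace Equiv.Perm

/-- Permutations of `Fin n` acting on the positions `1, …, n` of `Fin (n + 1)`. -/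
def succHom (n : ℕ) : Perm (Fin n) →* Perm (Fin (n + 1)) :=
  MonoidHom.mk' (fun σ => decomposeFin.symm (0, σ)) fun σ τ => by
    ext x
    refine Fin.cases ?_ (fun i => ?_) x <;> simp

variable {n : ℕ}

@[simp]
theorem succHom_apply_zero (σ : Perm (Fin n)) : succHom n σ 0 = 0 := by
  simp [succHom]

@[simp]
theorem succHom_apply_succ (σ : Perm (Fin n)) (i : Fin n) :
    succHom n σ i.succ = (σ i).succ := by
  simp [succHom]

theorem decomposeFin_symm_eq_swap_mul_succHom (p : Fin (n + 1)) (σ : Perm (Fin n)) :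
    decomposeFin.symm (p, σ) = swap 0 p * succHom n σ := by
  ext x
  refine Fin.cases ?_ (fun i => ?_) x <;> simp

theorem succHom_swap (a b : Fin n) : succHom n (swap a b) = swap a.succ b.succ := by
  ext x
  refine Fin.cases ?_ (fun i => ?_) x
  · simp [swap_apply_of_ne_of_ne (Fin.succ_ne_zero a).symm (Fin.succ_ne_zero b).symm]
  · simp [swap_apply_def, apply_ite Fin.succ]

theorem exists_succHom_eq {τ : Perm (Fin (n + 1))} (h : τ 0 = 0) :
    ∃ σ, succHom n σ = τ := by
  obtain ⟨⟨p, σ⟩, rfl⟩ := decomposeFin.symm.surjective τ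
  rw [decomposeFin_symm_apply_zero] at h
  exact ⟨σ, by rw [h]; rfl⟩

end Equiv.Perm

section Cosets

variable (R : Type*) [CommSemiring R] (n : ℕ)

noncomputable def stabilizerSum : MonoidAlgebra R (Perm (Fin (n + 1))) :=
  mapDomainAlgHom R R (succHom n) (∑ σ, single σ 1)

noncomputable def cosetSum (p : Fin (n + 1)) : MonoidAlgebra R (Perm (Fin (n + 1))) :=
  single (swap 0 p) 1 * stabilizerSum R n

variable {R n}

theorem single_mul_stabilizerSum {τ : Perm (Fin (n + 1))} (h : τ 0 = 0) :
    single τ (1 : R) * stabilizerSum R n = stabilizerSum R n := by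
  obtain ⟨σ, rfl⟩ := exists_succHom_eq h
  rw [stabilizerSum, ← mapDomain_single, ← mapDomainAlgHom_apply R R, ← map_mul,
    single_one_mul_sum_single]

theorem single_mul_cosetSum (τ : Perm (Fin (n + 1))) (p : Fin (n + 1)) :
    single τ (1 : R) * cosetSum R n p = cosetSum R n (τ p) := by
  set ρ := swap 0 (τ p) * τ * swap 0 p
  have hρ : ρ 0 = 0 := by simp [ρ]
  have hτ : τ * swap 0 p = swap 0 (τ p) * ρ := by simp [ρ, ← mul_assoc]
  rw [cosetSum, ← mul_assoc, single_mul_single, mul_one, hτ, ← mul_one (1 : R),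
    ← single_mul_single, mul_assoc, single_mul_stabilizerSum hρ, cosetSum]

theorem sum_single_eq_sum_cosetSum :
    ∑ σ : Perm (Fin (n + 1)), single σ (1 : R) = ∑ p, cosetSum R n p := by
  rw [← decomposeFin.symm.sum_comp, Fintype.sum_prod_type]
  refine Finset.sum_congr rfl fun p _ => ?_
  simp only [cosetSum, stabilizerSum, map_sum, mapDomainAlgHom_apply, mapDomain_single,
    Finset.mul_sum, single_mul_single, mul_one, decomposeFin_symm_eq_swap_mul_succHom]

end Cosets

theorem Rh_of_lt {k i : ℕ} (ξ : ℂ) (h : i + 1 < k) :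
    Rh k i ξ = single (swap ⟨i, by omega⟩ ⟨i + 1, h⟩) 1 + ξ⁻¹ • 1 :=
  dif_pos h

theorem mapDomainAlgHom_succHom_Rh (k i : ℕ) (ξ : ℂ) :
    mapDomainAlgHom ℂ ℂ (succHom k) (Rh k i ξ) = Rh (k + 1) (i + 1) ξ := by
  unfold Rh
  by_cases h : i + 1 < k
  · rw [dif_pos h, dif_pos (by omega), map_add, map_smul, map_one, mapDomainAlgHom_apply,
      mapDomain_single, succHom_swap]
    rfl
  · rw [dif_neg h, dif_neg (by omega), map_one]

/-- `Ř_{m-1}(n-m+1) ⋯ Ř_1(n-1) Ř_0(n)`, the last `m` factors of the first bracket of the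
product for `S_{n+1}`. -/
noncomputable def fusionTail (n m : ℕ) : MonoidAlgebra ℂ (Perm (Fin (n + 1))) :=
  ((List.range m).reverse.map fun j => Rh (n + 1) j ((n - j : ℕ) : ℂ)).prod

theorem fusionTail_succ (n m : ℕ) :
    fusionTail n (m + 1) = Rh (n + 1) m ((n - m : ℕ) : ℂ) * fusionTail n m := by
  simp [fusionTail, List.range_succ]

theorem fusionTail_mul_stabilizerSum {n m : ℕ} (hm : m ≤ n) :
    fusionTail n m * stabilizerSum ℂ n =
      cosetSum ℂ n ⟨m, by omega⟩ +
        ((n + 1 - m : ℕ) : ℂ)⁻¹ • ∑ p : Fin (n + 1) with p.val < m, cosetSum ℂ n p := by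
  induction m with
  | zero => simp [fusionTail, cosetSum, ← Perm.one_def, ← MonoidAlgebra.one_def]
  | succ m ih =>
    have hfix : ∀ p : Fin (n + 1), p.val < m →
        swap (⟨m, by omega⟩ : Fin (n + 1)) ⟨m + 1, by omega⟩ p = p := fun p hp =>
      swap_apply_of_ne_of_ne (by simp [Fin.ext_iff]; omega) (by simp [Fin.ext_iff]; omega)
    have hsplit : ∑ p : Fin (n + 1) with p.val < m + 1, cosetSum ℂ n p =
        cosetSum ℂ n ⟨m, by omega⟩ + ∑ p : Fin (n + 1) with p.val < m, cosetSum ℂ n p := by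
      rw [← Finset.sum_insert (by simp)]
      congr 1
      ext p
      simp only [Finset.mem_filter, Finset.mem_univ, true_and, Finset.mem_insert, Fin.ext_iff]
      omega
    rw [fusionTail_succ, mul_assoc, ih (by omega), Rh_of_lt _ (by omega : m + 1 < n + 1)]
    simp only [add_mul, mul_add, smul_mul_assoc, one_mul, mul_smul_comm, Finset.mul_sum,
      single_mul_cosetSum, swap_apply_left]
    rw [Finset.sum_congr rfl fun p hp => by rw [hfix p (Finset.mem_filter.1 hp).2],
      Finset.sum_add_distrib, ← Finset.smul_sum, hsplit]
    obtain ⟨d, rfl⟩ := Nat.exists_eq_add_of_le hm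
    rw [show m + 1 + d + 1 - m = d + 2 by omega, show m + 1 + d - m = d + 1 by omega,
      show m + 1 + d + 1 - (m + 1) = d + 1 by omega]
    have h1 : ((d + 1 : ℕ) : ℂ) ≠ 0 := Nat.cast_ne_zero.2 (by omega)
    have h2 : ((d + 2 : ℕ) : ℂ) ≠ 0 := Nat.cast_ne_zero.2 (by omega)
    push_cast at h1 h2 ⊢
    match_scalars <;> field_simp
    ring

theorem fusionTail_self_mul_stabilizerSum (n : ℕ) :
    fusionTail n n * stabilizerSum ℂ n = ∑ σ, single σ 1 := by
  rw [fusionTail_mul_stabilizerSum le_rfl, Nat.add_sub_cancel_left, Nat.cast_one, inv_one,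
    one_smul, sum_single_eq_sum_cosetSum, Fin.sum_univ_castSucc, add_comm (∑ i : Fin n, _)]
  congr 1
  simp [Finset.sum_filter, Fin.sum_univ_castSucc]

noncomputable def fusionBracket (k a : ℕ) : MonoidAlgebra ℂ (Perm (Fin k)) :=
  ((List.range (k - 1 - a)).map fun t => Rh k (k - 2 - t) ((t + 1 : ℕ) : ℂ)).prod

noncomputable def fusionProduct (k : ℕ) : MonoidAlgebra ℂ (Perm (Fin k)) :=
  ((List.range (k - 1)).map (fusionBracket k)).prod

theorem fusionBracket_zero (n : ℕ) : fusionBracket (n + 1) 0 = fusionTail n n := by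
  rw [fusionBracket, fusionTail, show n + 1 - 1 - 0 = n by omega, List.range_eq_range',
    List.reverse_range', ← List.range_eq_range', List.map_map]
  refine congrArg _ (List.map_congr_left fun t ht => ?_)
  rw [List.mem_range] at ht
  simp only [Function.comp_apply]
  congr 2 <;> omega

theorem mapDomainAlgHom_succHom_fusionBracket (n a : ℕ) :
    mapDomainAlgHom ℂ ℂ (succHom (n + 1)) (fusionBracket (n + 1) a) =
      fusionBracket (n + 2) (a + 1) := by
  rw [fusionBracket, fusionBracket, map_list_prod, List.map_map,
    show n + 2 - 1 - (a + 1) = n + 1 - 1 - a by omega]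
  refine congrArg _ (List.map_congr_left fun t ht => ?_)
  rw [List.mem_range] at ht
  rw [Function.comp_apply, mapDomainAlgHom_succHom_Rh]
  congr 1
  omega

theorem fusionProduct_succ_succ (n : ℕ) :
    fusionProduct (n + 2) =
      fusionTail (n + 1) (n + 1) *
        mapDomainAlgHom ℂ ℂ (succHom (n + 1)) (fusionProduct (n + 1)) := by
  rw [fusionProduct, fusionProduct, map_list_prod, List.map_map, ← fusionBracket_zero,
    show n + 2 - 1 = n + 1 from rfl, List.range_succ_eq_map, List.map_cons, List.prod_cons,
    List.map_map, Nat.add_sub_cancel]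
  congr 2
  exact List.map_congr_left fun a _ => (mapDomainAlgHom_succHom_fusionBracket n a).symm

theorem fusionProduct_eq_sum_single : ∀ k, fusionProduct k = ∑ σ : Perm (Fin k), single σ 1
  | 0 => by simp [fusionProduct, MonoidAlgebra.one_def]
  | 1 => by simp [fusionProduct, MonoidAlgebra.one_def]
  | n + 2 => by
    rw [fusionProduct_succ_succ, fusionProduct_eq_sum_single (n + 1), ← stabilizerSum,
      fusionTail_self_mul_stabilizerSum]

/-- Jucys' fusion formula. In the group algebra `ℂ[S_k]`, the
symmetrizer `e_k = (1/k!) ∑_σ σ` factorizes as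
`e_k = (1/k!) (Ř_{k-1}(1) ⋯ Ř_1(k-1)) ⋯ (Ř_{k-1}(1) Ř_{k-2}(2)) (Ř_{k-1}(1))`,
where `Ř` is written with 1-indexed simple transpositions as in the paper (so the
`1-indexed` `Ř_s` is `Rh (s-1)` here). -/
theorem statement9 (k : ℕ) :
    (k.factorial : ℂ)⁻¹ •
        (∑ σ : Equiv.Perm (Fin k), MonoidAlgebra.single σ (1 : ℂ)) =
      (k.factorial : ℂ)⁻¹ •
        ((List.range (k - 1)).map fun a =>
            ((List.range (k - 1 - a)).map fun t =>
              Rh k (k - 2 - t) ((t + 1 : ℕ) : ℂ)).prod).prod := by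
  rw [← fusionProduct_eq_sum_single]
  rfl
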